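/- arXiv:math/0505428 — 2 statements merged into one kernel-verified Lean document; each statement's English description precedes it below -/
import Mathlib

section
/- Contour estimate at a simple pole on the imaginary axis: Let E be a complex Banach space, c ∈ ℂ with Re c = 0, r > 0, and U ⊆ ℂ an open set containing the closed disc of centre c and radius r. Let f : U ∖ {c} → E be analytic and suppose there is an analytic function g : U → E with g(λ) = (λ − c)·f(λ) for all λ ∈ U ∖ {c} (i.e. f has at most a simple pole at c). If ‖(Re λ)·f(λ)‖ ≤ K for every λ with |λ − c| = r, then ‖(1/(2πi)) ∮_{|λ−c|=r} f(λ) dλ‖ ≤ 2K. -/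
/-!
On the circle `|z - c| = r` one has `(z - c)⁻¹ = conj (z - c) / r²`, hence
`Re (z - c) = (r² / 2) ((z - c)⁻¹ + (z - c) / r²)`. Integrating `g` against this,
Cauchy's formula and the Cauchy–Goursat theorem give `∮ Re (z - c) g(z) dz = π i r² g(c)`, while
the hypothesis bounds the left side by `2π r · r K`; thus `‖g(c)‖ ≤ 2K`. Finally
`(2π i)⁻¹ ∮ f = g(c)` by Cauchy's formula, since `f = (z - c)⁻¹ g` on the circle.
-/

open Metric Complex Real

theorem Complex.inv_add_div_sq_of_norm_eq {w : ℂ} {R : ℝ} (h : ‖w‖ = R) :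
    w⁻¹ + w / R ^ 2 = 2 * w.re / R ^ 2 := by
  have hconj := add_conj w
  push_cast at hconj
  rw [inv_def, normSq_eq_norm_sq, h]
  push_cast
  linear_combination hconj / (R : ℂ) ^ 2

section CircleIntegral

variable {E : Type*} [NormedAddCommGroup E] [NormedSpace ℂ E] [CompleteSpace E]
  {g : ℂ → E} {c : ℂ} {R : ℝ}

theorem DiffContOnCl.circleIntegral_re_sub_smul (hg : DiffContOnCl ℂ g (ball c R)) (hR : 0 < R) :
    (∮ z in C(c, R), ((z - c).re : ℂ) • g z) = (π * I * R ^ 2 : ℂ) • g c := by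
  have hR0 : (R : ℂ) ≠ 0 := ofReal_ne_zero.mpr hR.ne'
  have hpole : CircleIntegrable (fun z ↦ (z - c)⁻¹ • g z) c R := by
    refine ContinuousOn.circleIntegrable hR.le (ContinuousOn.smul ?_
      (hg.continuousOn_ball.mono sphere_subset_closedBall))
    exact (continuousOn_id.sub continuousOn_const).inv₀
      fun z hz ↦ sub_ne_zero.mpr (ne_of_mem_sphere hz hR.ne')
  have hholo : DiffContOnCl ℂ (fun z ↦ ((z - c) / R ^ 2) • g z) (ball c R) :=
    (((differentiable_id.sub_const c).div_const _).diffContOnCl).smul hg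
  have hholo_int : CircleIntegrable (fun z ↦ ((z - c) / R ^ 2) • g z) c R :=
    (hholo.continuousOn_ball.mono sphere_subset_closedBall).circleIntegrable hR.le
  have hsplit : Set.EqOn (fun z ↦ ((z - c).re : ℂ) • g z)
      (fun z ↦ ((R : ℂ) ^ 2 / 2) • ((z - c)⁻¹ • g z + ((z - c) / R ^ 2) • g z))
      (sphere c R) := by
    intro z hz
    simp only [← add_smul, smul_smul]
    rw [inv_add_div_sq_of_norm_eq (mem_sphere_iff_norm.mp hz)]
    congr 1
    field_simp
  rw [circleIntegral.integral_congr hR.le hsplit, circleIntegral.integral_smul,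
    circleIntegral.integral_add hpole hholo_int, hg.circleIntegral_sub_inv_smul (mem_ball_self hR),
    hholo.circleIntegral_eq_zero hR.le, add_zero, smul_smul]
  congr 1
  field_simp

theorem DiffContOnCl.norm_le_of_norm_re_sub_smul_le (hg : DiffContOnCl ℂ g (ball c R))
    (hR : 0 < R) {K : ℝ} (hK : ∀ z ∈ sphere c R, ‖((z - c).re : ℂ) • g z‖ ≤ R * K) :
    ‖g c‖ ≤ 2 * K := by
  have hbound := circleIntegral.norm_integral_le_of_norm_le_const hR.le hK
  rw [hg.circleIntegral_re_sub_smul hR, norm_smul] at hbound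
  have hnorm : ‖(π * I * R ^ 2 : ℂ)‖ = π * R ^ 2 := by
    simp [abs_of_pos Real.pi_pos]
  rw [hnorm] at hbound
  have : 0 < π * R ^ 2 := by positivity
  nlinarith

theorem DiffContOnCl.circleIntegral_eq_of_sub_smul_eq {f : ℂ → E}
    (hg : DiffContOnCl ℂ g (ball c R)) (hR : 0 < R)
    (hfg : ∀ z ∈ sphere c R, g z = (z - c) • f z) :
    (∮ z in C(c, R), f z) = (2 * π * I : ℂ) • g c := by
  rw [← hg.circleIntegral_sub_inv_smul (mem_ball_self hR)]
  refine circleIntegral.integral_congr hR.le fun z hz ↦ ?_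
  rw [hfg z hz, smul_smul, inv_mul_cancel₀ (sub_ne_zero.mpr (ne_of_mem_sphere hz hR.ne')),
    one_smul]

end CircleIntegral

theorem contour_estimate_simple_pole_general
    {E : Type*} [NormedAddCommGroup E] [NormedSpace ℂ E] [CompleteSpace E]
    (c : ℂ) (hc : c.re = 0) (r : ℝ) (hr : 0 < r)
    (U : Set ℂ) (hball : closedBall c r ⊆ U)
    (f : ℂ → E)
    (g : ℂ → E) (hg : DifferentiableOn ℂ g U)
    (hfg : ∀ z ∈ U \ {c}, g z = (z - c) • f z)
    (K : ℝ) (hK : ∀ z : ℂ, ‖z - c‖ = r → ‖((z.re : ℂ)) • f z‖ ≤ K) :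
    ‖(2 * Real.pi * Complex.I)⁻¹ • (∮ z in C(c, r), f z)‖ ≤ 2 * K := by
  have hg' : DiffContOnCl ℂ g (ball c r) :=
    (hg.mono ((closure_ball c hr.ne').symm ▸ hball)).diffContOnCl
  have hfg' : ∀ z ∈ sphere c r, g z = (z - c) • f z := fun z hz ↦
    hfg z ⟨hball (sphere_subset_closedBall hz), ne_of_mem_sphere hz hr.ne'⟩
  have h2πI : (2 * π * I : ℂ) ≠ 0 := by simp [Real.pi_ne_zero, I_ne_zero]
  rw [hg'.circleIntegral_eq_of_sub_smul_eq hr hfg', smul_smul, inv_mul_cancel₀ h2πI, one_smul]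
  refine hg'.norm_le_of_norm_re_sub_smul_le hr fun z hz ↦ ?_
  have hzc : ‖z - c‖ = r := mem_sphere_iff_norm.mp hz
  rw [hfg' z hz, smul_comm, norm_smul, hzc, sub_re, hc, sub_zero]
  exact mul_le_mul_of_nonneg_left (hK z hzc) hr.le

/-- Contour estimate at a simple pole on the imaginary axis: if `f` is analytic on
`U \ {c}` (with `Re c = 0`), has at most a simple pole at `c` (witnessed by the
analytic function `g` with `g(λ) = (λ - c) f(λ)` off `c`), and
`‖(Re λ) • f(λ)‖ ≤ K` on the circle `|λ - c| = r`, then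
`‖(1/(2πi)) ∮_{|λ-c|=r} f(λ) dλ‖ ≤ 2 K`. -/
theorem contour_estimate_simple_pole
    {E : Type*} [NormedAddCommGroup E] [NormedSpace ℂ E] [CompleteSpace E]
    (c : ℂ) (hc : c.re = 0) (r : ℝ) (hr : 0 < r)
    (U : Set ℂ) (hU : IsOpen U) (hball : closedBall c r ⊆ U)
    (f : ℂ → E) (hf : DifferentiableOn ℂ f (U \ {c}))
    (g : ℂ → E) (hg : DifferentiableOn ℂ g U)
    (hfg : ∀ z ∈ U \ {c}, g z = (z - c) • f z)
    (K : ℝ) (hK : ∀ z : ℂ, ‖z - c‖ = r → ‖((z.re : ℂ)) • f z‖ ≤ K) :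
    ‖(2 * Real.pi * Complex.I)⁻¹ • (∮ z in C(c, r), f z)‖ ≤ 2 * K :=
  contour_estimate_simple_pole_general c hc r hr U hball f g hg hfg K hK
end

section
/- Eigenvalue gap estimate for a flat torus via Diophantine approximation: Let α > 0 be a real number, d ≥ 2 an integer, and C > 0 a constant such that |α − p/q| ≥ C/q^d for every integer p and every integer q ≥ 1. Then there exists a constant C′ > 0 such that for all integers m, n, m̄, n̄ with n² + α·m² ≠ n̄² + α·m̄², one has |(n² + α·m²) − (n̄² + α·m̄²)| ≥ C′ / (1 + max(n² + α·m², n̄² + α·m̄²))^{d−1}. -/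
set_option maxHeartbeats 1000000


/-- Eigenvalue gap estimate for a flat torus via Diophantine approximation:
if `|α - p/q| ≥ C / q ^ d` for all integers `p` and all integers `q ≥ 1`,
then there is `C' > 0` such that any two distinct numbers of the form
`n² + α m²` (`m, n ∈ ℤ`) differ by at least `C' / (1 + max of the two)^(d-1)`. -/
theorem torus_eigenvalue_gap (α : ℝ) (hα : 0 < α) (d : ℕ) (hd : 2 ≤ d)
    (C : ℝ) (hC : 0 < C)
    (hdioph : ∀ p q : ℤ, 1 ≤ q → C / (q : ℝ) ^ d ≤ |α - (p : ℝ) / (q : ℝ)|) :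
    ∃ C' : ℝ, 0 < C' ∧ ∀ m n mb nb : ℤ,
      (n : ℝ) ^ 2 + α * (m : ℝ) ^ 2 ≠ (nb : ℝ) ^ 2 + α * (mb : ℝ) ^ 2 →
      C' / (1 + max ((n : ℝ) ^ 2 + α * (m : ℝ) ^ 2)
              ((nb : ℝ) ^ 2 + α * (mb : ℝ) ^ 2)) ^ (d - 1) ≤
        |((n : ℝ) ^ 2 + α * (m : ℝ) ^ 2) - ((nb : ℝ) ^ 2 + α * (mb : ℝ) ^ 2)| := by
  -- extend the Diophantine hypothesis to all nonzero q
  have hdioph' : ∀ p q : ℤ, q ≠ 0 → C / |(q : ℝ)| ^ d ≤ |α - (p : ℝ) / (q : ℝ)| := by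
    intro p q hq
    rcases lt_or_gt_of_ne hq with h | h
    · have h1 : 1 ≤ -q := by omega
      have := hdioph (-p) (-q) h1
      have hcast : ((-q : ℤ) : ℝ) = -(q : ℝ) := by push_cast; ring
      have habs : |(q : ℝ)| = -(q : ℝ) := by
        rw [abs_of_neg]; exact_mod_cast h
      push_cast at this
      rw [neg_div_neg_eq] at this
      rw [habs]
      exact this
    · have h1 : 1 ≤ q := h
      have := hdioph p q h1
      have habs : |(q : ℝ)| = (q : ℝ) := by
        rw [abs_of_pos]; exact_mod_cast h
      rw [habs]; exact this
  set k : ℝ := max (2 / α) 1 with hk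
  have hk1 : (1 : ℝ) ≤ k := le_max_right _ _
  have hk0 : (0 : ℝ) < k := lt_of_lt_of_le one_pos hk1
  have hkpow : (0 : ℝ) < k ^ (d - 1) := pow_pos hk0 _
  refine ⟨min 1 (C / k ^ (d - 1)), lt_min one_pos (div_pos hC hkpow), ?_⟩
  intro m n mb nb hne
  set L1 : ℝ := (n : ℝ) ^ 2 + α * (m : ℝ) ^ 2 with hL1
  set L2 : ℝ := (nb : ℝ) ^ 2 + α * (mb : ℝ) ^ 2 with hL2
  have hL1nn : 0 ≤ L1 := by positivity
  have hM0 : 0 ≤ max L1 L2 := le_trans hL1nn (le_max_left _ _)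
  have h1M : (1 : ℝ) ≤ 1 + max L1 L2 := by linarith
  have hMpow : (1 : ℝ) ≤ (1 + max L1 L2) ^ (d - 1) := one_le_pow₀ h1M
  have hMpow0 : (0 : ℝ) < (1 + max L1 L2) ^ (d - 1) := lt_of_lt_of_le one_pos hMpow
  by_cases hq : m ^ 2 = mb ^ 2
  · -- integer gap case
    have hm : (m : ℝ) ^ 2 = (mb : ℝ) ^ 2 := by exact_mod_cast hq
    have hD : L1 - L2 = ((n ^ 2 - nb ^ 2 : ℤ) : ℝ) := by
      rw [hL1, hL2, hm]; push_cast; ring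
    have hnz : (n ^ 2 - nb ^ 2 : ℤ) ≠ 0 := by
      intro h
      apply hne
      rw [hL1, hL2, hm] at hne ⊢
      have : (n : ℝ) ^ 2 = (nb : ℝ) ^ 2 := by
        have h2 : (n ^ 2 : ℤ) = nb ^ 2 := by omega
        exact_mod_cast h2
      rw [this]
    have h1le : (1 : ℝ) ≤ |L1 - L2| := by
      rw [hD]
      rw [← Int.cast_abs]
      exact_mod_cast Int.one_le_abs hnz
    calc min 1 (C / k ^ (d - 1)) / (1 + max L1 L2) ^ (d - 1)
        ≤ min 1 (C / k ^ (d - 1)) := by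
          apply div_le_self (le_of_lt (lt_min one_pos (div_pos hC hkpow))) hMpow
      _ ≤ 1 := min_le_left _ _
      _ ≤ |L1 - L2| := h1le
  · -- Diophantine case
    set q : ℤ := m ^ 2 - mb ^ 2 with hqdef
    set p : ℤ := nb ^ 2 - n ^ 2 with hpdef
    have hqne : q ≠ 0 := by omega
    have hqRne : (q : ℝ) ≠ 0 := by exact_mod_cast hqne
    have habs1 : (1 : ℝ) ≤ |(q : ℝ)| := by
      rw [← Int.cast_abs]; exact_mod_cast Int.one_le_abs hqne
    have habs0 : (0 : ℝ) < |(q : ℝ)| := lt_of_lt_of_le one_pos habs1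
    have hD : L1 - L2 = α * (q : ℝ) - (p : ℝ) := by
      rw [hL1, hL2, hqdef, hpdef]; push_cast; ring
    have key : C / |(q : ℝ)| ^ (d - 1) ≤ |L1 - L2| := by
      have hdio := hdioph' p q hqne
      have heq : |α - (p : ℝ) / (q : ℝ)| = |L1 - L2| / |(q : ℝ)| := by
        rw [hD, ← abs_div]
        congr 1
        field_simp
      rw [heq] at hdio
      have h := (div_le_div_iff₀ (pow_pos habs0 d) habs0).mp hdio
      have hdpow : |(q : ℝ)| ^ d = |(q : ℝ)| ^ (d - 1) * |(q : ℝ)| := by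
        rw [← pow_succ]; congr 1; omega
      rw [hdpow] at h
      rw [div_le_iff₀ (pow_pos habs0 _)]
      have h2 : C * |(q : ℝ)| ≤ |L1 - L2| * |(q : ℝ)| ^ (d - 1) * |(q : ℝ)| := by
        linarith [h]
      have := le_of_mul_le_mul_right h2 habs0
      linarith [this]
    -- bound |q| by k * (1 + max)
    have hqR : |(q : ℝ)| = |(m : ℝ) ^ 2 - (mb : ℝ) ^ 2| := by
      rw [hqdef]; push_cast; ring_nf
    have hm1 : α * (m : ℝ) ^ 2 ≤ L1 := by
      rw [hL1]; nlinarith [sq_nonneg ((n : ℝ))]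
    have hm2 : α * (mb : ℝ) ^ 2 ≤ L2 := by
      rw [hL2]; nlinarith [sq_nonneg ((nb : ℝ))]
    have hL1M : L1 ≤ max L1 L2 := le_max_left _ _
    have hL2M : L2 ≤ max L1 L2 := le_max_right _ _
    have hqbound : |(q : ℝ)| ≤ k * (1 + max L1 L2) := by
      have habs2 : |(m : ℝ) ^ 2 - (mb : ℝ) ^ 2| ≤ (m : ℝ) ^ 2 + (mb : ℝ) ^ 2 := by
        rw [abs_sub_le_iff]
        constructor <;> nlinarith [sq_nonneg ((m : ℝ)), sq_nonneg ((mb : ℝ))]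
      have hsum : (m : ℝ) ^ 2 + (mb : ℝ) ^ 2 ≤ (2 / α) * (1 + max L1 L2) := by
        have e1 : α * (m : ℝ) ^ 2 ≤ max L1 L2 := le_trans hm1 hL1M
        have e2 : α * (mb : ℝ) ^ 2 ≤ max L1 L2 := le_trans hm2 hL2M
        rw [div_mul_eq_mul_div, le_div_iff₀ hα]
        calc ((m : ℝ) ^ 2 + (mb : ℝ) ^ 2) * α = α * (m : ℝ) ^ 2 + α * (mb : ℝ) ^ 2 := by
              ring
          _ ≤ 2 * (1 + max L1 L2) := by linarith
      have hk2 : (2 / α) * (1 + max L1 L2) ≤ k * (1 + max L1 L2) := by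
        apply mul_le_mul_of_nonneg_right (le_max_left _ _) (by linarith)
      rw [hqR]
      linarith
    have hqpow : |(q : ℝ)| ^ (d - 1) ≤ k ^ (d - 1) * (1 + max L1 L2) ^ (d - 1) := by
      rw [← mul_pow]
      exact pow_le_pow_left₀ (abs_nonneg _) hqbound _
    calc min 1 (C / k ^ (d - 1)) / (1 + max L1 L2) ^ (d - 1)
        ≤ (C / k ^ (d - 1)) / (1 + max L1 L2) ^ (d - 1) := by
          exact (div_le_div_iff_of_pos_right hMpow0).mpr (min_le_right _ _)
      _ = C / (k ^ (d - 1) * (1 + max L1 L2) ^ (d - 1)) := by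
          rw [div_div]
      _ ≤ C / |(q : ℝ)| ^ (d - 1) := by
          apply div_le_div_of_nonneg_left hC.le (pow_pos habs0 _) hqpow
      _ ≤ |L1 - L2| := key
end
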